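/- arXiv:1809.01275 — 3 statements merged into one kernel-verified Lean document; each statement's English description precedes it below -/
import Mathlib

section
/- Define the sequence θ₀ = 1 and θ_{t+1} = (√(θ_t⁴ + 4θ_t²) − θ_t²)/2 for t ≥ 0. Then for all t ≥ 0, 0 < θ_t ≤ 2/(t+2). -/
theorem stmt_5 (θ : ℕ → ℝ) (h0 : θ 0 = 1)
    (hrec : ∀ t, θ (t + 1) = (Real.sqrt ((θ t) ^ 4 + 4 * (θ t) ^ 2) - (θ t) ^ 2) / 2) :
    ∀ t, 0 < θ t ∧ θ t ≤ 2 / (t + 2) := by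
  intro t
  induction t with
  | zero => norm_num [h0]
  | succ n ih =>
    obtain ⟨hp, hb⟩ := ih
    have hs : Real.sqrt ((θ n) ^ 4 + 4 * (θ n) ^ 2) ^ 2 = (θ n) ^ 4 + 4 * (θ n) ^ 2 :=
      Real.sq_sqrt (by positivity)
    have hsnn : 0 ≤ Real.sqrt ((θ n) ^ 4 + 4 * (θ n) ^ 2) := Real.sqrt_nonneg _
    have hslt : (θ n) ^ 2 < Real.sqrt ((θ n) ^ 4 + 4 * (θ n) ^ 2) := by
      nlinarith [sq_nonneg (θ n)]
    have hxpos : 0 < θ (n + 1) := by rw [hrec]; linarith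
    have hxx : θ (n + 1) ^ 2 + (θ n) ^ 2 * θ (n + 1) = (θ n) ^ 2 := by
      rw [hrec]; nlinarith
    have hn2 : (0:ℝ) < (n : ℝ) + 2 := by positivity
    have hn3 : (0:ℝ) < (n : ℝ) + 3 := by positivity
    have hb2 : (θ n) ^ 2 ≤ (2 / ((n : ℝ) + 2)) ^ 2 := by
      apply pow_le_pow_left₀ hp.le hb
    refine ⟨hxpos, ?_⟩
    have hcpos : (0:ℝ) < 2 / ((n : ℝ) + 3) := by positivity
    have hc1 : 2 / ((n : ℝ) + 3) ≤ 1 := by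
      rw [div_le_one hn3]; linarith
    have hgoal : θ (n + 1) ≤ 2 / ((n : ℝ) + 3) := by
      have hkey : (2 / ((n : ℝ) + 2)) ^ 2 * (1 - 2 / ((n : ℝ) + 3)) ≤ (2 / ((n : ℝ) + 3)) ^ 2 := by
        have h1 : (1 - 2 / ((n:ℝ)+3)) = ((n:ℝ)+1)/((n:ℝ)+3) := by field_simp; ring
        rw [h1, div_pow, div_pow, div_mul_div_comm,
          div_le_div_iff₀ (by positivity) (by positivity)]
        nlinarith [sq_nonneg ((n:ℝ))]
      have hlt : θ n ^ 2 * (1 - 2/((n:ℝ)+3)) ≤ (2/((n:ℝ)+3))^2 := by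
        refine le_trans ?_ hkey
        have := mul_le_mul_of_nonneg_right hb2 (by linarith : (0:ℝ) ≤ 1 - 2/((n:ℝ)+3))
        linarith
      by_contra hcon
      push_neg at hcon
      have hxc : 0 < (θ (n+1) - 2/((n:ℝ)+3)) * (θ (n+1) + 2/((n:ℝ)+3)) :=
        mul_pos (by linarith) (by linarith)
      nlinarith [mul_pos (show (0:ℝ) < θ n ^ 2 from by positivity)
        (sub_pos.mpr hcon)]
    push_cast
    convert hgoal using 2
    ring
end

section
/- Let a, b ∈ ℝ^d with μ > 0 and D > 0, and consider x* = argmax over {x : ‖x − b‖ ≤ D} of −(μ/2)‖x − a‖² − ‖x − b‖. Then: (i) if ‖b − a‖ ≤ 1/μ, then x* = b; (ii) if 1/μ < ‖b − a‖ ≤ 1/μ + D, then x* = b − ((b − a)/‖b − a‖)(‖b − a‖ − 1/μ); (iii) if ‖b − a‖ > 1/μ + D, then x* = b − ((b − a)/‖b − a‖)D. -/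
open RealInnerProductSpace

lemma stmt8_concave {d : ℕ} (a b : EuclideanSpace ℝ (Fin d)) (μ D : ℝ) (hμ : 0 < μ) :
    StrictConcaveOn ℝ {x : EuclideanSpace ℝ (Fin d) | ‖x - b‖ ≤ D}
      (fun x => - (μ / 2) * ‖x - a‖ ^ 2 - ‖x - b‖) := by
  have hs : {x : EuclideanSpace ℝ (Fin d) | ‖x - b‖ ≤ D} = Metric.closedBall b D := by
    ext x; simp [Metric.mem_closedBall, dist_eq_norm]
  refine ⟨hs ▸ convex_closedBall b D, ?_⟩
  intro x _ y _ hxy p q hp hq hpq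
  have hzb : ‖p • x + q • y - b‖ ≤ p * ‖x - b‖ + q * ‖y - b‖ := by
    have h2 : p • x + q • y - b = p • (x - b) + q • (y - b) := by
      have h3 : p • (x - b) + q • (y - b) = p • x + q • y - (p + q) • b := by module
      rw [h3, hpq, one_smul]
    rw [h2]
    calc ‖p • (x - b) + q • (y - b)‖ ≤ ‖p • (x - b)‖ + ‖q • (y - b)‖ := norm_add_le _ _
      _ = p * ‖x - b‖ + q * ‖y - b‖ := by
        rw [norm_smul, norm_smul, Real.norm_eq_abs, Real.norm_eq_abs, abs_of_pos hp, abs_of_pos hq]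
  have hsq : ‖p • x + q • y - a‖ ^ 2
      = p * ‖x - a‖ ^ 2 + q * ‖y - a‖ ^ 2 - p * q * ‖x - y‖ ^ 2 := by
    have hz : p • x + q • y - a = p • (x - a) + q • (y - a) := by
      have h3 : p • (x - a) + q • (y - a) = p • x + q • y - (p + q) • a := by module
      rw [h3, hpq, one_smul]
    rw [hz, norm_add_sq_real]
    rw [norm_smul, norm_smul, real_inner_smul_left, real_inner_smul_right,
      Real.norm_eq_abs, Real.norm_eq_abs, abs_of_pos hp, abs_of_pos hq]
    have hd : ‖x - y‖ ^ 2 = ‖x - a‖ ^ 2 - 2 * ⟪x - a, y - a⟫ + ‖y - a‖ ^ 2 := by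
      rw [show x - y = (x - a) - (y - a) by abel, norm_sub_sq_real]
    linear_combination (p * q) * hd + (p * ‖x - a‖ ^ 2 + q * ‖y - a‖ ^ 2) * hpq
  have hpos : 0 < ‖x - y‖ ^ 2 := pow_pos (norm_pos_iff.2 (sub_ne_zero.2 hxy)) 2
  simp only [smul_eq_mul]
  nlinarith [mul_pos (mul_pos hp hq) hpos, hμ, hzb, hsq]

theorem stmt_8 {d : ℕ} (a b : EuclideanSpace ℝ (Fin d)) (μ D : ℝ)
    (hμ : 0 < μ) (hD : 0 < D)
    (xstar : EuclideanSpace ℝ (Fin d))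
    (hmem : ‖xstar - b‖ ≤ D)
    (hmax : IsMaxOn (fun x => - (μ / 2) * ‖x - a‖ ^ 2 - ‖x - b‖)
      {x | ‖x - b‖ ≤ D} xstar) :
    (‖b - a‖ ≤ 1 / μ → xstar = b) ∧
    (1 / μ < ‖b - a‖ → ‖b - a‖ ≤ 1 / μ + D →
      xstar = b - (‖b - a‖ - 1 / μ) • (‖b - a‖⁻¹ • (b - a))) ∧
    (1 / μ + D < ‖b - a‖ →
      xstar = b - D • (‖b - a‖⁻¹ • (b - a))) := by
  have hconc := stmt8_concave a b μ D hμ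
  have hmemS : xstar ∈ {x : EuclideanSpace ℝ (Fin d) | ‖x - b‖ ≤ D} := hmem
  have hq2 : ∀ x : EuclideanSpace ℝ (Fin d),
      (‖b - a‖ - ‖x - b‖) ^ 2 ≤ ‖x - a‖ ^ 2 := by
    intro x
    have tri1 : ‖b - a‖ ≤ ‖x - b‖ + ‖x - a‖ := by
      calc ‖b - a‖ ≤ ‖b - x‖ + ‖x - a‖ := norm_sub_le_norm_sub_add_norm_sub b x a
        _ = ‖x - b‖ + ‖x - a‖ := by rw [norm_sub_rev]
    have tri2 : ‖x - b‖ ≤ ‖b - a‖ + ‖x - a‖ := by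
      calc ‖x - b‖ ≤ ‖x - a‖ + ‖a - b‖ := norm_sub_le_norm_sub_add_norm_sub x a b
        _ = ‖b - a‖ + ‖x - a‖ := by rw [norm_sub_rev a b]; ring
    nlinarith [norm_nonneg (x - a)]
  refine ⟨?_, ?_, ?_⟩
  · -- case (i): ‖b - a‖ ≤ 1/μ
    intro h1
    have hμr : ‖b - a‖ * μ ≤ 1 := (le_div_iff₀ hμ).mp h1
    have hmax₀ : IsMaxOn (fun x => - (μ / 2) * ‖x - a‖ ^ 2 - ‖x - b‖)
        {x | ‖x - b‖ ≤ D} b := by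
      intro x hx
      simp only [Set.mem_setOf_eq] at hx ⊢
      simp only [sub_self, norm_zero]
      rw [← sub_nonneg]
      have key : - (μ / 2) * ‖b - a‖ ^ 2 - 0 - (- (μ / 2) * ‖x - a‖ ^ 2 - ‖x - b‖)
          = (μ / 2) * (‖x - a‖ ^ 2 - (‖b - a‖ - ‖x - b‖) ^ 2)
            + ‖x - b‖ * (1 - ‖b - a‖ * μ) + (μ / 2) * ‖x - b‖ ^ 2 := by ring
      rw [key]
      have t1 : 0 ≤ (μ / 2) * (‖x - a‖ ^ 2 - (‖b - a‖ - ‖x - b‖) ^ 2) :=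
        mul_nonneg (by positivity) (sub_nonneg.2 (hq2 x))
      have t2 : 0 ≤ ‖x - b‖ * (1 - ‖b - a‖ * μ) :=
        mul_nonneg (norm_nonneg _) (by linarith)
      have t3 : 0 ≤ (μ / 2) * ‖x - b‖ ^ 2 := by positivity
      linarith
    exact hconc.eq_of_isMaxOn hmax hmax₀ hmemS (by simp [hD.le])
  · -- case (ii)
    intro h1 h2
    have hr : 0 < ‖b - a‖ := lt_trans (by positivity) h1
    have hc : 0 ≤ ‖b - a‖ - 1 / μ := by linarith
    have e1 : b - (‖b - a‖ - 1 / μ) • (‖b - a‖⁻¹ • (b - a)) - b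
        = (-((‖b - a‖ - 1 / μ) * ‖b - a‖⁻¹)) • (b - a) := by module
    have hx₀b : ‖b - (‖b - a‖ - 1 / μ) • (‖b - a‖⁻¹ • (b - a)) - b‖ = ‖b - a‖ - 1 / μ := by
      rw [e1, norm_smul, Real.norm_eq_abs, abs_neg,
        abs_of_nonneg (mul_nonneg hc (inv_nonneg.2 hr.le))]
      field_simp
    have e2 : b - (‖b - a‖ - 1 / μ) • (‖b - a‖⁻¹ • (b - a)) - a
        = (1 - (‖b - a‖ - 1 / μ) * ‖b - a‖⁻¹) • (b - a) := by module
    have hcr1 : (‖b - a‖ - 1 / μ) * ‖b - a‖⁻¹ ≤ 1 := by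
      rw [← div_eq_mul_inv]
      refine (div_le_one hr).2 ?_
      have h0 : 0 < 1 / μ := by positivity
      linarith
    have hx₀a : ‖b - (‖b - a‖ - 1 / μ) • (‖b - a‖⁻¹ • (b - a)) - a‖ = 1 / μ := by
      rw [e2, norm_smul, Real.norm_eq_abs, abs_of_nonneg (by linarith)]
      field_simp
      ring
    have hmem₀ : b - (‖b - a‖ - 1 / μ) • (‖b - a‖⁻¹ • (b - a))
        ∈ {x : EuclideanSpace ℝ (Fin d) | ‖x - b‖ ≤ D} := by
      simp only [Set.mem_setOf_eq, hx₀b]; linarith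
    have hmax₀ : IsMaxOn (fun x => - (μ / 2) * ‖x - a‖ ^ 2 - ‖x - b‖)
        {x | ‖x - b‖ ≤ D} (b - (‖b - a‖ - 1 / μ) • (‖b - a‖⁻¹ • (b - a))) := by
      intro x hx
      simp only [Set.mem_setOf_eq] at hx ⊢
      rw [hx₀a, hx₀b, ← sub_nonneg]
      have key : - (μ / 2) * (1 / μ) ^ 2 - (‖b - a‖ - 1 / μ)
            - (- (μ / 2) * ‖x - a‖ ^ 2 - ‖x - b‖)
          = (μ * (‖b - a‖ - ‖x - b‖) - 1) ^ 2 / (2 * μ)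
            + (μ / 2) * (‖x - a‖ ^ 2 - (‖b - a‖ - ‖x - b‖) ^ 2) := by
        field_simp; ring
      rw [key]
      have t1 : 0 ≤ (μ / 2) * (‖x - a‖ ^ 2 - (‖b - a‖ - ‖x - b‖) ^ 2) :=
        mul_nonneg (by positivity) (sub_nonneg.2 (hq2 x))
      have t0 : 0 ≤ (μ * (‖b - a‖ - ‖x - b‖) - 1) ^ 2 / (2 * μ) := by positivity
      linarith
    exact hconc.eq_of_isMaxOn hmax hmax₀ hmemS hmem₀
  · -- case (iii)
    intro h1
    have hμ' : 0 < 1 / μ := by positivity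
    have hr : 0 < ‖b - a‖ := by linarith
    have e1 : b - D • (‖b - a‖⁻¹ • (b - a)) - b = (-(D * ‖b - a‖⁻¹)) • (b - a) := by module
    have hx₀b : ‖b - D • (‖b - a‖⁻¹ • (b - a)) - b‖ = D := by
      rw [e1, norm_smul, Real.norm_eq_abs, abs_neg,
        abs_of_nonneg (mul_nonneg hD.le (inv_nonneg.2 hr.le))]
      field_simp
    have e2 : b - D • (‖b - a‖⁻¹ • (b - a)) - a = (1 - D * ‖b - a‖⁻¹) • (b - a) := by module
    have hDr1 : D * ‖b - a‖⁻¹ ≤ 1 := by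
      rw [← div_eq_mul_inv]
      exact (div_le_one hr).2 (by linarith)
    have hx₀a : ‖b - D • (‖b - a‖⁻¹ • (b - a)) - a‖ = ‖b - a‖ - D := by
      rw [e2, norm_smul, Real.norm_eq_abs, abs_of_nonneg (by linarith)]
      field_simp
    have hmem₀ : b - D • (‖b - a‖⁻¹ • (b - a))
        ∈ {x : EuclideanSpace ℝ (Fin d) | ‖x - b‖ ≤ D} := by
      simp only [Set.mem_setOf_eq, hx₀b, le_refl]
    have h1' : 1 < (‖b - a‖ - D) * μ := (div_lt_iff₀ hμ).mp (by linarith)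
    have hmax₀ : IsMaxOn (fun x => - (μ / 2) * ‖x - a‖ ^ 2 - ‖x - b‖)
        {x | ‖x - b‖ ≤ D} (b - D • (‖b - a‖⁻¹ • (b - a))) := by
      intro x hx
      simp only [Set.mem_setOf_eq] at hx ⊢
      rw [hx₀a, hx₀b, ← sub_nonneg]
      have key : - (μ / 2) * (‖b - a‖ - D) ^ 2 - D
            - (- (μ / 2) * ‖x - a‖ ^ 2 - ‖x - b‖)
          = (μ / 2) * (‖x - a‖ ^ 2 - (‖b - a‖ - ‖x - b‖) ^ 2)
            + (D - ‖x - b‖) * ((‖b - a‖ - D) * μ - 1)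
            + (μ / 2) * (D - ‖x - b‖) ^ 2 := by ring
      rw [key]
      have t1 : 0 ≤ (μ / 2) * (‖x - a‖ ^ 2 - (‖b - a‖ - ‖x - b‖) ^ 2) :=
        mul_nonneg (by positivity) (sub_nonneg.2 (hq2 x))
      have t2 : 0 ≤ (D - ‖x - b‖) * ((‖b - a‖ - D) * μ - 1) :=
        mul_nonneg (by linarith) (by linarith)
      have t3 : 0 ≤ (μ / 2) * (D - ‖x - b‖) ^ 2 := by positivity
      linarith
    exact hconc.eq_of_isMaxOn hmax hmax₀ hmemS hmem₀
end

section
/- (Lemma of Yang–Lin, homotopy key inequality) Let F : ℝ^N → ℝ be convex with nonempty optimal set Λ*, let ε > 0, and let S_ε be the ε-sublevel set. For any λ ∈ ℝ^N, letting λ_ε† be the closest point to λ in S_ε, we have ‖λ − λ_ε†‖ ≤ (dist(λ_ε†, Λ*)/ε)·(F(λ) − F(λ_ε†)). -/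
theorem stmt_15 {N : ℕ} (F : EuclideanSpace ℝ (Fin N) → ℝ)
    (hFconv : ConvexOn ℝ Set.univ F) (hFcont : Continuous F)
    (Λstar : Set (EuclideanSpace ℝ (Fin N))) (hΛne : Λstar.Nonempty)
    (Fstar : ℝ)
    (hΛ : Λstar = {lam | ∀ y, F lam ≤ F y})
    (hFstar : ∀ lam ∈ Λstar, F lam = Fstar)
    (ε : ℝ) (hε : 0 < ε)
    (lam : EuclideanSpace ℝ (Fin N))
    (lamε : EuclideanSpace ℝ (Fin N))
    (hlamεmem : lamε ∈ {y | F y - Fstar ≤ ε})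
    (hlamεclosest : ∀ y ∈ {y | F y - Fstar ≤ ε}, ‖lam - lamε‖ ≤ ‖lam - y‖) :
    ‖lam - lamε‖ ≤ Metric.infDist lamε Λstar / ε * (F lam - F lamε) := by
  simp only [Set.mem_setOf_eq] at hlamεmem
  by_cases hcase : F lam - Fstar ≤ ε
  · -- lam is itself in the sublevel set, so lam = lamε
    have h0 : ‖lam - lamε‖ ≤ ‖lam - lam‖ := hlamεclosest lam hcase
    simp only [sub_self, norm_zero] at h0
    have : lam = lamε := sub_eq_zero.mp (norm_le_zero_iff.mp h0)
    rw [this]; simp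
  · push_neg at hcase
    set A : ℝ := F lam - F lamε with hA
    have hApos : 0 < A := by rw [hA]; linarith
    set e : ℝ := A + ε with he
    have hepos : 0 < e := by positivity
    set t' : ℝ := A / e with ht'
    have ht'pos : 0 < t' := div_pos hApos hepos
    have ht'lt : t' < 1 := by rw [ht', div_lt_one hepos]; linarith
    have hte : t' * e = A := by rw [ht']; field_simp
    have hse : (1 - t') * e = ε := by rw [ht']; field_simp; linarith
    -- key pointwise inequality
    have hkey : ∀ p ∈ Λstar, ε * ‖lam - lamε‖ ≤ A * ‖lamε - p‖ := by
      intro p hp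
      have hFp : F p = Fstar := hFstar p hp
      set q : EuclideanSpace ℝ (Fin N) := t' • p + (1 - t') • lam with hq
      have hFq : F q ≤ t' * F p + (1 - t') * F lam :=
        hFconv.2 (Set.mem_univ p) (Set.mem_univ lam) (le_of_lt ht'pos)
          (by linarith) (by ring)
      set y : EuclideanSpace ℝ (Fin N) :=
        (1/2 : ℝ) • lamε + (1/2 : ℝ) • q with hy
      have hFy : F y ≤ (1/2) * F lamε + (1/2) * F q :=
        hFconv.2 (Set.mem_univ lamε) (Set.mem_univ q) (by norm_num)
          (by norm_num) (by norm_num)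
      have hymem : F y - Fstar ≤ ε := by
        have h1 : (1 - t') * (F lam - Fstar) ≤ ε := by
          have : F lam - Fstar ≤ e := by rw [he, hA]; linarith
          nlinarith
        nlinarith [hFq, hFy, hlamεmem]
      have hproj : ‖lam - lamε‖ ≤ ‖lam - y‖ := hlamεclosest y hymem
      have hdecomp : lam - y =
          (1 - (1 - t')/2) • (lam - lamε) + (t'/2) • (lamε - p) := by
        simp only [hy, hq]
        module
      have hnorm : ‖lam - y‖ ≤
          (1 - (1 - t')/2) * ‖lam - lamε‖ + (t'/2) * ‖lamε - p‖ := by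
        rw [hdecomp]
        calc ‖(1 - (1 - t')/2) • (lam - lamε) + (t'/2) • (lamε - p)‖
            ≤ ‖(1 - (1 - t')/2) • (lam - lamε)‖ + ‖(t'/2) • (lamε - p)‖ :=
              norm_add_le _ _
          _ = (1 - (1 - t')/2) * ‖lam - lamε‖ + (t'/2) * ‖lamε - p‖ := by
              rw [norm_smul, norm_smul, Real.norm_eq_abs, Real.norm_eq_abs,
                abs_of_nonneg (by linarith), abs_of_nonneg (by linarith)]
      have hstep : (1 - t') * ‖lam - lamε‖ ≤ t' * ‖lamε - p‖ := by
        nlinarith [hproj, hnorm]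
      -- multiply by e
      nlinarith [mul_le_mul_of_nonneg_right hstep (le_of_lt hepos),
        norm_nonneg (lam - lamε), norm_nonneg (lamε - p)]
    -- pass to the infimum
    have hinf : ε * ‖lam - lamε‖ / A ≤ Metric.infDist lamε Λstar := by
      by_contra h
      push_neg at h
      obtain ⟨p, hp, hdp⟩ := (Metric.infDist_lt_iff hΛne).mp h
      rw [dist_eq_norm, lt_div_iff₀ hApos] at hdp
      nlinarith [hkey p hp]
    have hd0 : 0 ≤ Metric.infDist lamε Λstar := Metric.infDist_nonneg
    rw [div_mul_eq_mul_div, le_div_iff₀ hε]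
    rw [div_le_iff₀ hApos] at hinf
    nlinarith
end
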